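/- arXiv:2003.09458 — 2 statements merged into one kernel-verified Lean document; each statement's English description precedes it below -/
import Mathlib

section
/- The generating function for multus bitstring counts satisfies \sum_{m\ge 0} f(m+2) z^m = (1-z+z^2)/(1-2z+z^2-z^3) as an identity of formal power series. -/
open PowerSeries

/-- `f k = 2 f(k-1) - f(k-2) + f(k-3)`, `f 0 = 0`, `f 1 = f 2 = 1`;
`f (m+2)` counts multus bitstrings of length `m`. -/
def f : ℕ → ℤ
  | 0 => 0
  | 1 => 1
  | 2 => 1
  | (k + 3) => 2 * f (k + 2) - f (k + 1) + f k

/-- `∑ f(m+2) z^m = (1 - z + z^2)/(1 - 2z + z^2 - z^3)` as formal power series,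
stated as `(∑ f(m+2) z^m) * (1 - 2z + z^2 - z^3) = 1 - z + z^2` in `ℚ⟦z⟧`. -/
theorem multus_gf :
    (PowerSeries.mk fun m => (f (m + 2) : ℚ)) *
      (1 - 2 * (X : PowerSeries ℚ) + X ^ 2 - X ^ 3) = 1 - X + X ^ 2 := by
  set F := PowerSeries.mk fun m => (f (m + 2) : ℚ) with hF
  have h1 : F * (1 - 2 * (X : PowerSeries ℚ) + X ^ 2 - X ^ 3)
      = F - (F * X + F * X) + F * X ^ 2 - F * X ^ 3 := by ring
  rw [h1]
  ext n
  simp only [map_sub, map_add, coeff_one, coeff_mul_X_pow', coeff_X, coeff_X_pow, hF, coeff_mk]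
  match n with
  | 0 => norm_num [f]
  | 1 => norm_num [f]
  | 2 => norm_num [f]
  | (n + 3) =>
    have e1 : n + 3 - 1 = n + 2 := rfl
    have e2 : n + 3 - 2 = n + 1 := rfl
    have e3 : n + 3 - 3 = n := rfl
    have h4 : ¬ (n + 3 = 0) := by omega
    have h5 : ¬ (n + 3 = 1) := by omega
    have h6 : ¬ (n + 3 = 2) := by omega
    have h7 : (1 : ℕ) ≤ n + 3 := by omega
    have h8 : (2 : ℕ) ≤ n + 3 := by omega
    have h9 : (3 : ℕ) ≤ n + 3 := by omega
    rw [show n + 3 = n + 2 + 1 from rfl, coeff_succ_mul_X]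
    simp only [coeff_mk]
    simp only [if_pos h7, if_pos h8, if_pos h9, if_neg h4, if_neg h5, if_neg h6, e1, e2, e3,
      pow_one]
    have : f (n + 3 + 2) = 2 * f (n + 2 + 2) - f (n + 1 + 2) + f (n + 2) := by
      show f (n + 2 + 3) = _
      rw [f]
    rw [this]
    push_cast
    ring
end

section
/- Let a_n be the total number of 1s summed over all solus bitstrings of length n. Then \sum_{n\ge0} a_n z^n = z/(1-z-z^2)^2 as formal power series; in particular a_1=1, a_2=2, a_3=5, a_4=10, a_5=20. -/
open PowerSeries

/-- A bitstring is *solus* if no two adjacent bits are both `1`. -/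
def Solus (l : List Bool) : Prop :=
  l.Chain' (fun a b => ¬(a = true ∧ b = true))

open Classical in
/-- `a n` : total number of `1`s summed over all solus bitstrings of length `n`. -/
noncomputable def solusBitsum (n : ℕ) : ℕ :=
  ∑ v : Fin n → Bool, if Solus (List.ofFn v) then (List.ofFn v).count true else 0

instance : DecidablePred Solus := fun l => by unfold Solus List.Chain'; infer_instance

/-- computable version of `solusBitsum` -/
def sb (n : ℕ) : ℕ :=
  ∑ v : Fin n → Bool, if Solus (List.ofFn v) then (List.ofFn v).count true else 0

/-- number of solus strings of length `n` -/
def sc (n : ℕ) : ℕ :=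
  ∑ v : Fin n → Bool, if Solus (List.ofFn v) then 1 else 0

lemma solusBitsum_eq (n : ℕ) : solusBitsum n = sb n := by
  unfold solusBitsum sb
  apply Finset.sum_congr rfl
  intro v _
  congr 1

lemma sum_ofFn_succ {M : Type*} [AddCommMonoid M] (f : List Bool → M) (n : ℕ) :
    (∑ v : Fin (n+1) → Bool, f (List.ofFn v))
      = ∑ b : Bool, ∑ v : Fin n → Bool, f (b :: List.ofFn v) := by
  calc (∑ v : Fin (n+1) → Bool, f (List.ofFn v))
      = ∑ p : Bool × (Fin n → Bool), f (p.1 :: List.ofFn p.2) := by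
        apply Fintype.sum_equiv (Fin.consEquiv fun _ => Bool).symm
        intro v
        simp [List.ofFn_succ, Fin.consEquiv, Fin.tail]
        rfl
    _ = ∑ b : Bool, ∑ v : Fin n → Bool, f (b :: List.ofFn v) := Fintype.sum_prod_type _

lemma sum_ofFn_succ2 {M : Type*} [AddCommMonoid M] (f : List Bool → M) (n : ℕ) :
    (∑ v : Fin (n+2) → Bool, f (List.ofFn v))
      = ∑ b : Bool, ∑ c : Bool, ∑ v : Fin n → Bool, f (b :: c :: List.ofFn v) := by
  rw [sum_ofFn_succ f (n+1)]
  exact Finset.sum_congr rfl fun b _ => sum_ofFn_succ (fun l => f (b :: l)) n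

lemma solus_cons_cons (a b : Bool) (l : List Bool) :
    Solus (a :: b :: l) ↔ ¬(a = true ∧ b = true) ∧ Solus (b :: l) :=
  List.isChain_cons_cons

lemma solus_false_cons (l : List Bool) : Solus (false :: l) ↔ Solus l := by
  unfold Solus List.Chain'
  rw [List.isChain_cons]
  simp

lemma sc_succ (n : ℕ) : sc (n+1)
    = ∑ b : Bool, ∑ v : Fin n → Bool, if Solus (b :: List.ofFn v) then 1 else 0 :=
  sum_ofFn_succ (fun l => if Solus l then 1 else 0) n

lemma sc_succ2 (n : ℕ) : sc (n+2)
    = ∑ b : Bool, ∑ c : Bool, ∑ v : Fin n → Bool,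
        if Solus (b :: c :: List.ofFn v) then 1 else 0 :=
  sum_ofFn_succ2 (fun l => if Solus l then 1 else 0) n

lemma sb_succ (n : ℕ) : sb (n+1)
    = ∑ b : Bool, ∑ v : Fin n → Bool,
        if Solus (b :: List.ofFn v) then (b :: List.ofFn v).count true else 0 :=
  sum_ofFn_succ (fun l => if Solus l then l.count true else 0) n

lemma sb_succ2 (n : ℕ) : sb (n+2)
    = ∑ b : Bool, ∑ c : Bool, ∑ v : Fin n → Bool,
        if Solus (b :: c :: List.ofFn v) then (b :: c :: List.ofFn v).count true else 0 :=
  sum_ofFn_succ2 (fun l => if Solus l then l.count true else 0) n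

lemma sc_rec (n : ℕ) : sc (n + 2) = sc (n + 1) + sc n := by
  rw [sc_succ2, sc_succ]
  unfold sc
  simp only [Fintype.sum_bool, solus_cons_cons, solus_false_cons]
  simp
  ring

lemma ite_split (P : Prop) [Decidable P] (l : List Bool) :
    (if P then l.count true + 1 else 0)
      = (if P then l.count true else 0) + (if P then 1 else 0) := by
  split <;> simp

lemma sb_rec (n : ℕ) : sb (n + 2) = sb (n + 1) + sb n + sc n := by
  rw [sb_succ2, sb_succ]
  unfold sb sc
  simp only [Fintype.sum_bool, solus_cons_cons, solus_false_cons, List.count_cons]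
  simp
  simp only [ite_split, Finset.sum_add_distrib, Finset.sum_boole, Nat.cast_id]
  ring

lemma sc_zero : sc 0 = 1 := by
  simp [sc, List.ofFn_zero, Solus, List.Chain']

lemma sc_one : sc 1 = 2 := by
  rw [sc_succ]
  simp [Solus, List.Chain']

lemma sb_zero : sb 0 = 0 := by
  simp [sb, List.ofFn_zero]

lemma sb_one : sb 1 = 1 := by
  rw [sb_succ]
  simp [Solus, List.Chain']

lemma sb_two : sb 2 = 2 := by rw [show (2:ℕ) = 0 + 2 from rfl, sb_rec, sb_one, sb_zero, sc_zero]
lemma sc_two : sc 2 = 3 := by rw [show (2:ℕ) = 0 + 2 from rfl, sc_rec, sc_one, sc_zero]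
lemma sc_three : sc 3 = 5 := by rw [show (3:ℕ) = 1 + 2 from rfl, sc_rec, sc_two, sc_one]
lemma sb_three : sb 3 = 5 := by
  rw [show (3:ℕ) = 1 + 2 from rfl, sb_rec, sb_two, sb_one, sc_one]
lemma sb_four : sb 4 = 10 := by
  rw [show (4:ℕ) = 2 + 2 from rfl, sb_rec, sb_three, sb_two, sc_two]
lemma sb_five : sb 5 = 20 := by
  rw [show (5:ℕ) = 3 + 2 from rfl, sb_rec, sb_four, sb_three, sc_three]

/-- `∑ aₙ zⁿ = z/(1-z-z²)²`, stated as `(∑ aₙ zⁿ)(1-z-z²)² = z` in `ℚ⟦z⟧`;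
in particular `a₁=1, a₂=2, a₃=5, a₄=10, a₅=20`. -/
theorem solus_bitsum_gf :
    (PowerSeries.mk fun n => (solusBitsum n : ℚ)) *
      (1 - (X : PowerSeries ℚ) - X ^ 2) ^ 2 = X ∧
    solusBitsum 1 = 1 ∧ solusBitsum 2 = 2 ∧ solusBitsum 3 = 5 ∧
    solusBitsum 4 = 10 ∧ solusBitsum 5 = 20 := by
  have hFA : (PowerSeries.mk fun n => (solusBitsum n : ℚ))
      = PowerSeries.mk fun n => (sb n : ℚ) := by
    simp only [solusBitsum_eq]
  set FA : PowerSeries ℚ := PowerSeries.mk fun n => (sb n : ℚ) with hFAdef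
  set FS : PowerSeries ℚ := PowerSeries.mk fun n => (sc n : ℚ) with hFSdef
  have hS : FS = 1 + X + X ^ 1 * FS + X ^ 2 * FS := by
    ext n
    match n with
    | 0 =>
      simp [hFSdef, coeff_X_pow_mul', sc_zero]
    | 1 =>
      norm_num [hFSdef, coeff_X_pow_mul', sc_one, sc_zero]
    | (n+2) =>
      simp only [hFSdef, map_add, coeff_mk, coeff_one, coeff_X, coeff_X_pow_mul',
        show (1:ℕ) ≤ n + 2 by omega, show (2:ℕ) ≤ n + 2 by omega, if_true,
        show n + 2 - 1 = n + 1 from rfl, show n + 2 - 2 = n from rfl]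
      rw [sc_rec]
      push_cast
      simp [Nat.add_eq_zero]
  have hA : FA = X + X ^ 1 * FA + X ^ 2 * FA + X ^ 2 * FS := by
    ext n
    match n with
    | 0 =>
      simp [hFAdef, coeff_X_pow_mul', sb_zero]
    | 1 =>
      simp [hFAdef, coeff_X_pow_mul', sb_one, sb_zero]
    | (n+2) =>
      simp only [hFAdef, hFSdef, map_add, coeff_mk, coeff_X, coeff_X_pow_mul',
        show (1:ℕ) ≤ n + 2 by omega, show (2:ℕ) ≤ n + 2 by omega, if_true,
        show n + 2 - 1 = n + 1 from rfl, show n + 2 - 2 = n from rfl]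
      rw [sb_rec]
      push_cast
      simp [Nat.add_eq_zero]
  refine ⟨?_, ?_, ?_, ?_, ?_, ?_⟩
  · rw [hFA]
    linear_combination (1 - (X : PowerSeries ℚ) - X ^ 2) * hA + X ^ 2 * hS
  · rw [solusBitsum_eq, sb_one]
  · rw [solusBitsum_eq, sb_two]
  · rw [solusBitsum_eq, sb_three]
  · rw [solusBitsum_eq, sb_four]
  · rw [solusBitsum_eq, sb_five]
end
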